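/- With φ as defined, φ(A→(B∧C)) > φ((A→B)∧(A→C)) for all formulas A, B, C. Concretely: (2(φ(B)+1)φ(C))^φ(A) > 2(φ(B)^φ(A)+1)·φ(C)^φ(A), given φ(A), φ(B), φ(C) ≥ 2. -/

import Mathlib

/-!
Write `a = φ(A)`, `b = φ(B)`, `c = φ(C)`. The two sides share the factor `c ^ a`, and
`2 (b ^ a + 1) ≤ 2 (b + 1) ^ a < 4 (b + 1) ^ a ≤ 2 ^ a (b + 1) ^ a` because `a ≥ 2`.
-/

/-- First-order formulas: ⊤, ⊥, non-constant atoms `X t⃗` (atoms applied to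
de Bruijn term-variable indices), implication, conjunction and universal
quantification (de Bruijn style: `all A` binds index 0). -/
inductive Formula : Type where
  | top : Formula
  | bot : Formula
  | atom : ℕ → List ℕ → Formula
  | arr : Formula → Formula → Formula
  | and : Formula → Formula → Formula
  | all : Formula → Formula

/-- The measure φ on formulas. -/
def phi : Formula → ℕ
  | .top => 2
  | .bot => 2
  | .atom _ _ => 2
  | .and A B => 2 * (phi A + 1) * phi B
  | .arr A B => phi B ^ phi A
  | .all A => phi A ^ 2

/-- The measure ψ on formulas. -/
def psi : Formula → ℕ
  | .top => 2
  | .bot => 2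
  | .atom _ _ => 2
  | .and A B => 2 * (psi A + 1) * psi B
  | .arr A B => psi B ^ psi A
  | .all A => 2 * psi A

theorem two_le_phi : ∀ A : Formula, 2 ≤ phi A
  | .top | .bot | .atom _ _ => le_rfl
  | .and A B => by
    have := two_le_phi A
    have := two_le_phi B
    simp only [phi]
    nlinarith
  | .arr A B => (two_le_phi B).trans (Nat.le_self_pow (by have := two_le_phi A; omega) _)
  | .all A => by
    have := two_le_phi A
    simp only [phi]
    nlinarith

theorem two_mul_pow_add_one_lt {a : ℕ} (ha : 2 ≤ a) (b : ℕ) :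
    2 * (b ^ a + 1) < (2 * (b + 1)) ^ a := by
  have hpos : 0 < (b + 1) ^ a := by positivity
  calc 2 * (b ^ a + 1) = 2 * (b ^ a + 1 ^ a) := by rw [one_pow]
    _ ≤ 2 * (b + 1) ^ a := by gcongr; exact pow_add_pow_le (by omega) (by omega) (by omega)
    _ < 2 ^ 2 * (b + 1) ^ a := by omega
    _ ≤ 2 ^ a * (b + 1) ^ a := by gcongr; omega
    _ = (2 * (b + 1)) ^ a := (mul_pow ..).symm

theorem two_mul_pow_add_one_mul_pow_lt {a c : ℕ} (ha : 2 ≤ a) (hc : 0 < c) (b : ℕ) :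
    2 * (b ^ a + 1) * c ^ a < (2 * (b + 1) * c) ^ a := by
  rw [mul_pow]
  exact Nat.mul_lt_mul_of_pos_right (two_mul_pow_add_one_lt ha b) (by positivity)

/-- φ(A→(B∧C)) > φ((A→B)∧(A→C)) for all formulas A, B, C. -/
theorem phi_decrease_distrib :
    ∀ A B C : Formula, phi (.arr A (.and B C)) > phi (.and (.arr A B) (.arr A C)) := by
  intro A B C
  simp only [phi]
  exact two_mul_pow_add_one_mul_pow_lt (two_le_phi A) (by have := two_le_phi C; omega) _
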